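/- For every finite set E with a symmetric irreflexive relation I ⊆ E×E, there exists a labelled Petri net (N,λ,L) with event set T = E, label set L = E, and λ the identity map, such that the simplicial scheme associated to the labelled asynchronous system (A(N),λ,L) has vertex set equal to E and its simplices are exactly the nonempty finite subsets {e₁,…,e_k} ⊆ E whose elements are pairwise independent, i.e. (e_i,e_j) ∈ I for all i ≠ j (the clique complex of (E,I)). In particular, in this Petri net, for every nonempty set {e_{i₀},…,e_{i_n}} of mutually I-independent events the sequence e_{i₀}⋯e_{i_n} is firable from the initial marking M₀. -/

import Mathlib

/-! Take one place for every ordered pair `(a, b)` with `¬ I a b`, marked once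
initially, and attach each of `a` and `b` to it by a self-loop. Every event can then always
fire and leaves the marking unchanged, so all words are firable, and two distinct events are
independent exactly when they share no place, i.e. when `I` holds between them in both orders. -/

/-- The independence relation of the asynchronous system of a Petri net:
two events are independent when the scalar product
`(pre e₁ + post e₁) · (pre e₂ + post e₂)` is zero. -/
def PetriIndep {P T : Type} [Fintype P] (pre post : T → P → ℕ) (e₁ e₂ : T) : Prop :=
  ∑ p : P, (pre e₁ p + post e₁ p) * (pre e₂ p + post e₂ p) = 0

/-- The transition relation of the asynchronous system of a Petri net:
`(M, e, M') ∈ Tran` iff `M ≥ pre e` and `M' = M - pre e + post e`. -/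
def PetriTran {P T : Type} (pre post : T → P → ℕ) (M : P → ℕ) (e : T) (M' : P → ℕ) : Prop :=
  (∀ p, pre e p ≤ M p) ∧ ∀ p, M' p = M p - pre e p + post e p

/-- Iterated execution of a word of events from a state: `ExecRel tran s w t`
means `s · w = t`. -/
def ExecRel {S E : Type} (tran : S → E → S → Prop) : S → List E → S → Prop
  | s, [], t => s = t
  | s, e :: w, t => ∃ u, tran s e u ∧ ExecRel tran u w t

/-- A marking is reachable if it is obtained from the initial marking `M₀` by a
finite sequence of transitions. -/
def PetriReachable {P T : Type} (pre post : T → P → ℕ) (M₀ M : P → ℕ) : Prop :=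
  Relation.ReflTransGen (fun M M' => ∃ e, PetriTran pre post M e M') M₀ M

theorem Set.Nonempty.exists_injective_fin_succ_range_eq {α : Type*} [Finite α] {X : Set α}
    (hX : X.Nonempty) :
    ∃ (k : ℕ) (a : Fin (k + 1) → α), Function.Injective a ∧ Set.range a = X := by
  obtain ⟨n, ⟨e⟩⟩ := Finite.exists_equiv_fin X
  obtain ⟨k, rfl⟩ : ∃ k, n = k + 1 :=
    Nat.exists_eq_succ_of_ne_zero fun hn => (hn ▸ e ⟨_, hX.some_mem⟩).elim0
  refine ⟨k, Subtype.val ∘ e.symm, Subtype.val_injective.comp e.symm.injective, ?_⟩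
  rw [Set.range_comp, e.symm.range_eq_univ, Set.image_univ, Subtype.range_coe]

theorem execRel_of_forall_tran {S E : Type} {tran : S → E → S → Prop} {s : S}
    (h : ∀ e, tran s e s) : ∀ l : List E, ExecRel tran s l s
  | [] => rfl
  | e :: l => ⟨s, h e, execRel_of_forall_tran h l⟩

section PetriIndep

variable {P T : Type} [Fintype P] {pre post : T → P → ℕ} {e₁ e₂ : T}

theorem petriIndep_iff :
    PetriIndep pre post e₁ e₂ ↔ ∀ p, pre e₁ p + post e₁ p = 0 ∨ pre e₂ p + post e₂ p = 0 := by
  simp only [PetriIndep, Finset.sum_eq_zero_iff, Finset.mem_univ, true_implies, mul_eq_zero]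

theorem PetriIndep.symm (h : PetriIndep pre post e₁ e₂) : PetriIndep pre post e₂ e₁ := by
  rw [petriIndep_iff] at h ⊢
  exact fun p => (h p).symm

end PetriIndep

section Simplices

variable {P T : Type} [Fintype P] (pre post : T → P → ℕ) (M₀ : P → ℕ)

/-- The simplices of the simplicial scheme of the net with identity labelling. -/
def PetriSimplices : Set (Set T) :=
  {X | ∃ (k : ℕ) (a : Fin (k + 1) → T) (M : P → ℕ), PetriReachable pre post M₀ M ∧
    (∀ i j, i < j → PetriIndep pre post (a i) (a j)) ∧
    (∃ M', ExecRel (PetriTran pre post) M (List.ofFn a) M') ∧ X = Set.range a}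

variable {pre post M₀} {X : Set T}

theorem PetriSimplices.pairwise_petriIndep (hX : X ∈ PetriSimplices pre post M₀) :
    X.Nonempty ∧ X.Pairwise (PetriIndep pre post) := by
  obtain ⟨k, a, -, -, hindep, -, rfl⟩ := hX
  refine ⟨Set.range_nonempty a, ?_⟩
  rintro _ ⟨i, rfl⟩ _ ⟨j, rfl⟩ hne
  rcases lt_or_gt_of_ne (ne_of_apply_ne a hne) with hij | hji
  · exact hindep i j hij
  · exact (hindep j i hji).symm

theorem mem_petriSimplices_of_pairwise [Finite T]
    (hfire : ∀ l : List T, ∃ M, ExecRel (PetriTran pre post) M₀ l M)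
    (hne : X.Nonempty) (hX : X.Pairwise (PetriIndep pre post)) :
    X ∈ PetriSimplices pre post M₀ := by
  obtain ⟨k, a, ha, rfl⟩ := hne.exists_injective_fin_succ_range_eq
  refine ⟨k, a, M₀, .refl, fun i j hij => ?_, hfire _, rfl⟩
  exact hX (Set.mem_range_self i) (Set.mem_range_self j) (ha.ne hij.ne)

theorem petriSimplices_eq_of_forall_firable [Finite T]
    (hfire : ∀ l : List T, ∃ M, ExecRel (PetriTran pre post) M₀ l M) :
    PetriSimplices pre post M₀ = {X | X.Nonempty ∧ X.Pairwise (PetriIndep pre post)} :=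
  Set.ext fun _ => ⟨PetriSimplices.pairwise_petriIndep,
    fun ⟨hne, hX⟩ => mem_petriSimplices_of_pairwise hfire hne hX⟩

end Simplices

section SelfLoops

variable {E P : Type} (R : E → P → Prop)

open Classical in
/-- The arc weights of the net in which event `e` is joined to place `p` by a self-loop
exactly when `R e p`; it serves as both `pre` and `post`. -/
noncomputable def selfLoopArcs (e : E) (p : P) : ℕ :=
  if R e p then 1 else 0

theorem petriTran_selfLoopArcs_one (e : E) :
    PetriTran (selfLoopArcs R) (selfLoopArcs R) 1 e 1 := by
  refine ⟨fun p => ?_, fun p => ?_⟩ <;> by_cases h : R e p <;> simp [selfLoopArcs, h]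

theorem petriIndep_selfLoopArcs_iff [Fintype P] {e₁ e₂ : E} :
    PetriIndep (selfLoopArcs R) (selfLoopArcs R) e₁ e₂ ↔ ∀ p, ¬ (R e₁ p ∧ R e₂ p) := by
  rw [petriIndep_iff]
  refine forall_congr' fun p => ?_
  by_cases h₁ : R e₁ p <;> by_cases h₂ : R e₂ p <;> simp [selfLoopArcs, h₁, h₂]

end SelfLoops

section CliqueNet

variable {E : Type} (I : E → E → Prop)

/-- Places are the pairs `(a, b)`; those with `I a b` stay isolated. -/
def NonEdgeIncidence (e : E) (q : E × E) : Prop :=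
  ¬ I q.1 q.2 ∧ (e = q.1 ∨ e = q.2)

variable {I} in
theorem forall_not_nonEdgeIncidence_iff {e₁ e₂ : E} (hne : e₁ ≠ e₂) :
    (∀ q, ¬ (NonEdgeIncidence I e₁ q ∧ NonEdgeIncidence I e₂ q)) ↔ I e₁ e₂ ∧ I e₂ e₁ := by
  constructor
  · intro h
    refine ⟨not_not.1 fun hI => h (e₁, e₂) ?_, not_not.1 fun hI => h (e₂, e₁) ?_⟩ <;>
      simp [NonEdgeIncidence, hI]
  · rintro ⟨h₁₂, h₂₁⟩ ⟨a, b⟩ ⟨⟨hab, ha₁ | hb₁⟩, -, ha₂ | hb₂⟩ <;> subst_vars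
    exacts [hne rfl, hab h₁₂, hab h₂₁, hne rfl]

variable [Fintype E]

noncomputable def cliqueNetArcs : E → Fin (Fintype.card (E × E)) → ℕ :=
  selfLoopArcs fun e p => NonEdgeIncidence I e ((Fintype.equivFin (E × E)).symm p)

variable {I} in
theorem petriIndep_cliqueNetArcs_iff {e₁ e₂ : E} (hne : e₁ ≠ e₂) :
    PetriIndep (cliqueNetArcs I) (cliqueNetArcs I) e₁ e₂ ↔ I e₁ e₂ ∧ I e₂ e₁ := by
  rw [cliqueNetArcs, petriIndep_selfLoopArcs_iff, ← forall_not_nonEdgeIncidence_iff hne]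
  exact (Fintype.equivFin (E × E)).symm.forall_congr fun _ => Iff.rfl

theorem pairwise_petriIndep_cliqueNetArcs_iff {X : Set E} :
    X.Pairwise (PetriIndep (cliqueNetArcs I) (cliqueNetArcs I)) ↔ X.Pairwise I :=
  ⟨fun h _ ha _ hb hab => ((petriIndep_cliqueNetArcs_iff hab).1 (h ha hb hab)).1,
    fun h _ ha _ hb hab => (petriIndep_cliqueNetArcs_iff hab).2 ⟨h ha hb hab, h hb ha hab.symm⟩⟩

end CliqueNet

theorem petri_net_clique_complex_general {E : Type} [Fintype E]
    (I : E → E → Prop) :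
    ∃ (m : ℕ) (pre post : E → Fin m → ℕ) (M₀ : Fin m → ℕ),
      -- the vertex set λ⁺E of the associated simplicial scheme is all of E
      ({l : E | ∃ (M u : Fin m → ℕ), PetriReachable pre post M₀ M ∧
          PetriTran pre post M l u} = Set.univ) ∧
      -- the simplices of the associated simplicial scheme are exactly the cliques of (E, I)
      ({X : Set E | ∃ (k : ℕ) (a : Fin (k + 1) → E) (M : Fin m → ℕ),
          PetriReachable pre post M₀ M ∧
          (∀ i j, i < j → PetriIndep pre post (a i) (a j)) ∧
          (∃ M', ExecRel (PetriTran pre post) M (List.ofFn a) M') ∧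
          X = Set.range a} =
        {X : Set E | X.Nonempty ∧ ∀ a ∈ X, ∀ b ∈ X, a ≠ b → I a b}) ∧
      -- every nonempty sequence of mutually I-independent events is firable from M₀
      (∀ l : List E, l ≠ [] → l.Pairwise I →
        ∃ M : Fin m → ℕ, ExecRel (PetriTran pre post) M₀ l M) := by
  have htran : ∀ e, PetriTran (cliqueNetArcs I) (cliqueNetArcs I) 1 e 1 :=
    petriTran_selfLoopArcs_one _
  have hfire (l : List E) : ∃ M, ExecRel (PetriTran (cliqueNetArcs I) (cliqueNetArcs I)) 1 l M :=
    ⟨1, execRel_of_forall_tran htran l⟩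
  refine ⟨_, cliqueNetArcs I, cliqueNetArcs I, 1, ?_, ?_, fun l _ _ => hfire l⟩
  · exact Set.eq_univ_of_forall fun e => ⟨1, 1, .refl, htran e⟩
  · change PetriSimplices _ _ _ = {X | X.Nonempty ∧ X.Pairwise I}
    simp_rw [petriSimplices_eq_of_forall_firable hfire, pairwise_petriIndep_cliqueNetArcs_iff]

/-- for every finite set `E` with a symmetric irreflexive relation `I`,
there is a labelled Petri net with event set `E`, label set `E` and identity label
function (so its places form a finite set `Fin m`) such that the associated simplicial
scheme has vertex set `E` and its simplices are exactly the nonempty subsets of `E`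
of pairwise `I`-independent elements (the clique complex of `(E, I)`); moreover every
sequence of pairwise `I`-independent events is firable from the initial marking `M₀`. -/
theorem petri_net_clique_complex {E : Type} [Fintype E]
    (I : E → E → Prop) (hsymm : ∀ a b, I a b → I b a) (hirr : ∀ a, ¬ I a a) :
    ∃ (m : ℕ) (pre post : E → Fin m → ℕ) (M₀ : Fin m → ℕ),
      -- the vertex set λ⁺E of the associated simplicial scheme is all of E
      ({l : E | ∃ (M u : Fin m → ℕ), PetriReachable pre post M₀ M ∧
          PetriTran pre post M l u} = Set.univ) ∧
      -- the simplices of the associated simplicial scheme are exactly the cliques of (E, I)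
      ({X : Set E | ∃ (k : ℕ) (a : Fin (k + 1) → E) (M : Fin m → ℕ),
          PetriReachable pre post M₀ M ∧
          (∀ i j, i < j → PetriIndep pre post (a i) (a j)) ∧
          (∃ M', ExecRel (PetriTran pre post) M (List.ofFn a) M') ∧
          X = Set.range a} =
        {X : Set E | X.Nonempty ∧ ∀ a ∈ X, ∀ b ∈ X, a ≠ b → I a b}) ∧
      -- every nonempty sequence of mutually I-independent events is firable from M₀
      (∀ l : List E, l ≠ [] → l.Pairwise I →
        ∃ M : Fin m → ℕ, ExecRel (PetriTran pre post) M₀ l M) :=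
  petri_net_clique_complex_general I
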